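/- arXiv:1410.0448 — 11 statements merged into one kernel-verified Lean document; each statement's English description precedes it below -/
import Mathlib

section
/- Let d ≥ 1 and let rˡ, rᵇ, r^{1,b}, …, r^{d,b} be real numbers with rˡ ≤ rᵇ and rᵇ ≤ r^{i,b} for every i. Define F : ℝ × ℝᵈ → ℝ by F(w,a) := −rᵇ·w + Σ_{i=1}^d (rᵇ·aᵢ − r^{i,b}·aᵢ⁺) + rˡ·(w + Σ_{i=1}^d aᵢ⁻)⁺ − rᵇ·(w + Σ_{i=1}^d aᵢ⁻)⁻. Then for all x₁ ≤ 0, x₂ ≤ 0, y ∈ ℝ and a ∈ ℝᵈ: F(y + x₁, a) + F(−y + x₂, −a) ≤ 0. -/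
/-- Lemma `lemnew2`: the borrowing-discounted driver `F = f̃_b` satisfies
`F(y + x₁, a) + F(−y + x₂, −a) ≤ 0` whenever `x₁ ≤ 0` and `x₂ ≤ 0`. -/
theorem stmt_3 (d : ℕ) (hd : 1 ≤ d) (rl rb : ℝ) (rib : Fin d → ℝ)
    (hlb : rl ≤ rb) (hib : ∀ i, rb ≤ rib i)
    (F : ℝ → (Fin d → ℝ) → ℝ)
    (hF : ∀ w a, F w a = -(rb * w) + (∑ i, (rb * a i - rib i * max (a i) 0))
      + rl * max (w + ∑ i, max (-(a i)) 0) 0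
      - rb * max (-(w + ∑ i, max (-(a i)) 0)) 0)
    (x₁ x₂ y : ℝ) (hx₁ : x₁ ≤ 0) (hx₂ : x₂ ≤ 0) (a : Fin d → ℝ) :
    F (y + x₁) a + F (-y + x₂) (fun i => -(a i)) ≤ 0 := by
  rw [hF, hF]
  simp only [neg_neg]
  set Sp := ∑ i, max (a i) 0 with hSp
  set Sm := ∑ i, max (-(a i)) 0 with hSm
  have hsub : ∀ u : ℝ, max u 0 - max (-u) 0 = u := fun u => by
    rcases le_total u 0 with h | h
    · rw [max_eq_right h, max_eq_left (by linarith)]; ring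
    · rw [max_eq_left h, max_eq_right (by linarith)]; ring
  -- termwise bound for the sums
  have hterm : ∀ i ∈ Finset.univ (α := Fin d),
      (rb * a i - rib i * max (a i) 0) + (rb * (-(a i)) - rib i * max (-(a i)) 0)
        ≤ (-(rb * max (a i) 0) - rb * max (-(a i)) 0) := by
    intro i _
    have h1 : (0:ℝ) ≤ max (a i) 0 := le_max_right _ _
    have h2 : (0:ℝ) ≤ max (-(a i)) 0 := le_max_right _ _
    have h3 : 0 ≤ (rib i - rb) * (max (a i) 0 + max (-(a i)) 0) :=
      mul_nonneg (sub_nonneg.mpr (hib i)) (add_nonneg h1 h2)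
    nlinarith [hsub (a i)]
  have hsum : (∑ i, (rb * a i - rib i * max (a i) 0))
      + (∑ i, (rb * (-(a i)) - rib i * max (-(a i)) 0))
      ≤ -(rb * Sp) - rb * Sm := by
    calc (∑ i, (rb * a i - rib i * max (a i) 0))
        + (∑ i, (rb * (-(a i)) - rib i * max (-(a i)) 0))
        = ∑ i, ((rb * a i - rib i * max (a i) 0)
            + (rb * (-(a i)) - rib i * max (-(a i)) 0)) := by
          rw [Finset.sum_add_distrib]
      _ ≤ ∑ i, (-(rb * max (a i) 0) - rb * max (-(a i)) 0) := Finset.sum_le_sum hterm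
      _ = -(rb * Sp) - rb * Sm := by
          rw [Finset.sum_sub_distrib]
          simp only [← neg_mul, ← Finset.mul_sum, hSp, hSm]
  have hb : ∀ u : ℝ, rl * max u 0 - rb * max (-u) 0 ≤ rb * u := by
    intro u
    have h1 : rl * max u 0 ≤ rb * max u 0 :=
      mul_le_mul_of_nonneg_right hlb (le_max_right u 0)
    have h3 : rb * (max u 0) - rb * (max (-u) 0) = rb * u := by
      rw [← mul_sub, hsub u]
    linarith
  have hb1 := hb (y + x₁ + Sm)
  have hb2 := hb (-y + x₂ + Sp)
  nlinarith [hsum, hb1, hb2]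
end

section
/- Let d ≥ 1, let rˡ, rᵇ, r^{1,b}, …, r^{d,b} be real numbers with rˡ ≤ rᵇ, and let Bˡ, Bᵇ > 0. Define g : ℝ × ℝᵈ → ℝ by g(y,a) := −Σ_{i=1}^d r^{i,b}·aᵢ⁺ + rˡ·(y + Σ_{i=1}^d aᵢ⁻)⁺ − rᵇ·(y + Σ_{i=1}^d aᵢ⁻)⁻. Then for all x₁, x₂, y ∈ ℝ and a ∈ ℝᵈ: g(y + x₁Bˡ, a) + g(−y + x₂Bᵇ, −a) − x₁rˡBˡ − x₂rᵇBᵇ ≤ min{ (rˡ − rᵇ)·x₂Bᵇ + Σ_{i=1}^d (rˡ − r^{i,b})|aᵢ| , (rᵇ − rˡ)·x₁Bˡ + Σ_{i=1}^d (rᵇ − r^{i,b})|aᵢ| }. -/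
/-- The bound from the proof of Lemma `lemmnew3`. -/
theorem stmt_4 (d : ℕ) (hd : 1 ≤ d) (rl rb : ℝ) (rib : Fin d → ℝ) (Bl Bb : ℝ)
    (hlb : rl ≤ rb) (hBl : 0 < Bl) (hBb : 0 < Bb)
    (g : ℝ → (Fin d → ℝ) → ℝ)
    (hg : ∀ y a, g y a = -(∑ i, rib i * max (a i) 0)
      + rl * max (y + ∑ i, max (-(a i)) 0) 0
      - rb * max (-(y + ∑ i, max (-(a i)) 0)) 0)
    (x₁ x₂ y : ℝ) (a : Fin d → ℝ) :
    g (y + x₁ * Bl) a + g (-y + x₂ * Bb) (fun i => -(a i)) - x₁ * rl * Bl - x₂ * rb * Bb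
      ≤ min ((rl - rb) * (x₂ * Bb) + ∑ i, (rl - rib i) * |a i|)
            ((rb - rl) * (x₁ * Bl) + ∑ i, (rb - rib i) * |a i|) := by
  have key : ∀ x : ℝ, (rl * max x 0 - rb * max (-x) 0 ≤ rl * x) ∧
      (rl * max x 0 - rb * max (-x) 0 ≤ rb * x) := by
    intro x
    rcases le_total 0 x with h | h
    · rw [max_eq_left h, max_eq_right (by linarith)]
      constructor <;> nlinarith
    · rw [max_eq_right h, max_eq_left (by linarith)]
      constructor <;> nlinarith
  rw [hg, hg]
  simp only [neg_neg]
  set S1 := ∑ i, max (a i) 0 with hS1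
  set S2 := ∑ i, max (-(a i)) 0 with hS2
  set Ra := ∑ i, rib i * max (a i) 0 with hRa
  set Rb := ∑ i, rib i * max (-(a i)) 0 with hRb
  have habs : ∀ i, |a i| = max (a i) 0 + max (-(a i)) 0 := by
    intro i
    rcases le_total 0 (a i) with h | h
    · rw [abs_of_nonneg h, max_eq_left h, max_eq_right (by linarith)]; ring
    · rw [abs_of_nonpos h, max_eq_right h, max_eq_left (by linarith)]; ring
  have hsuml : ∑ i, (rl - rib i) * |a i| = rl * (S1 + S2) - (Ra + Rb) := by
    rw [hS1, hS2, hRa, hRb, mul_add, Finset.mul_sum, Finset.mul_sum]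
    rw [← Finset.sum_add_distrib, ← Finset.sum_add_distrib, ← Finset.sum_sub_distrib]
    apply Finset.sum_congr rfl
    intro i _
    rw [habs i]; ring
  have hsumb : ∑ i, (rb - rib i) * |a i| = rb * (S1 + S2) - (Ra + Rb) := by
    rw [hS1, hS2, hRa, hRb, mul_add, Finset.mul_sum, Finset.mul_sum]
    rw [← Finset.sum_add_distrib, ← Finset.sum_add_distrib, ← Finset.sum_sub_distrib]
    apply Finset.sum_congr rfl
    intro i _
    rw [habs i]; ring
  obtain ⟨k1l, k1b⟩ := key (y + x₁ * Bl + S2)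
  obtain ⟨k2l, k2b⟩ := key (-y + x₂ * Bb + S1)
  rw [le_min_iff]
  constructor
  · rw [hsuml]; nlinarith [k1l, k2l]
  · rw [hsumb]; nlinarith [k1b, k2b]
end

section
/- Let d ≥ 1, let rˡ, rᵇ, r^{1,b}, …, r^{d,b} be real numbers with rˡ ≤ rᵇ, rˡ ≤ r^{i,b} and rᵇ ≤ r^{i,b} for every i, and let Bˡ, Bᵇ > 0. Define g : ℝ × ℝᵈ → ℝ by g(y,a) := −Σ_{i=1}^d r^{i,b}·aᵢ⁺ + rˡ·(y + Σ_{i=1}^d aᵢ⁻)⁺ − rᵇ·(y + Σ_{i=1}^d aᵢ⁻)⁻. If x₁ ≥ 0, x₂ ≤ 0 and x₁·x₂ = 0, then for all y ∈ ℝ and a ∈ ℝᵈ: g(y + x₁Bˡ, a) + g(−y + x₂Bᵇ, −a) − x₁rˡBˡ − x₂rᵇBᵇ ≤ 0. -/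
/-!
Each driver is concave and piecewise linear in the cash variable `y`, with slopes `rˡ` and `rᵇ`,
so for any rate `r ∈ [rˡ, rᵇ]` it lies below its chord `-∑ rⁱᵇ aᵢ⁺ + r (y + ∑ aᵢ⁻)`. Adding the
two drivers, the positions `a` and `-a` contribute `∑ (r - rⁱᵇ)(aᵢ⁺ + aᵢ⁻) ≤ 0`, leaving
`r (x₁Bˡ + x₂Bᵇ)`. Since one of `x₁, x₂` vanishes, choosing `r = rᵇ` (if `x₁ = 0`) or `r = rˡ`
(if `x₂ = 0`) cancels the remaining term exactly.
-/

theorem mul_max_sub_mul_max_neg_le {rl rb r : ℝ} (hl : rl ≤ r) (hr : r ≤ rb) (w : ℝ) :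
    rl * max w 0 - rb * max (-w) 0 ≤ r * w := by
  rcases le_total 0 w with hw | hw
  · rw [max_eq_left hw, max_eq_right (neg_nonpos.mpr hw)]
    nlinarith
  · rw [max_eq_right hw, max_eq_left (neg_nonneg.mpr hw)]
    nlinarith

theorem Finset.mul_sum_le_sum_mul {ι : Type*} (s : Finset ι) {r : ℝ} {w c : ι → ℝ}
    (hw : ∀ i ∈ s, r ≤ w i) (hc : ∀ i ∈ s, 0 ≤ c i) :
    r * ∑ i ∈ s, c i ≤ ∑ i ∈ s, w i * c i := by
  rw [Finset.mul_sum]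
  exact Finset.sum_le_sum fun i hi => mul_le_mul_of_nonneg_right (hw i hi) (hc i hi)

section Driver

variable {ι : Type*} [Fintype ι] {rl rb : ℝ} {rib : ι → ℝ}

def driver (rl rb : ℝ) (rib : ι → ℝ) (y : ℝ) (a : ι → ℝ) : ℝ :=
  -(∑ i, rib i * max (a i) 0)
    + rl * max (y + ∑ i, max (-(a i)) 0) 0
    - rb * max (-(y + ∑ i, max (-(a i)) 0)) 0

theorem driver_le {r : ℝ} (hl : rl ≤ r) (hr : r ≤ rb) (y : ℝ) (a : ι → ℝ) :
    driver rl rb rib y a ≤ -(∑ i, rib i * max (a i) 0) + r * (y + ∑ i, max (-(a i)) 0) := by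
  have := mul_max_sub_mul_max_neg_le hl hr (y + ∑ i, max (-(a i)) 0)
  unfold driver
  linarith

theorem driver_add_driver_neg_le {r : ℝ} (hl : rl ≤ r) (hr : r ≤ rb) (hib : ∀ i, rb ≤ rib i)
    (y y' : ℝ) (a : ι → ℝ) :
    driver rl rb rib y a + driver rl rb rib y' (fun i => -(a i)) ≤ r * (y + y') := by
  have hrib : ∀ i ∈ Finset.univ, r ≤ rib i := fun i _ => hr.trans (hib i)
  have hpos := Finset.univ.mul_sum_le_sum_mul hrib fun i _ => le_max_right (a i) 0
  have hneg := Finset.univ.mul_sum_le_sum_mul hrib fun i _ => le_max_right (-(a i)) 0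
  have h₁ := driver_le (rib := rib) hl hr y a
  have h₂ := driver_le (rib := rib) hl hr y' fun i => -(a i)
  simp only [neg_neg] at h₂
  linarith

end Driver

theorem stmt_5_general (d : ℕ) (rl rb : ℝ) (rib : Fin d → ℝ) (Bl Bb : ℝ)
    (hlb : rl ≤ rb) (hibb : ∀ i, rb ≤ rib i)
    (g : ℝ → (Fin d → ℝ) → ℝ)
    (hg : ∀ y a, g y a = -(∑ i, rib i * max (a i) 0)
      + rl * max (y + ∑ i, max (-(a i)) 0) 0
      - rb * max (-(y + ∑ i, max (-(a i)) 0)) 0)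
    (x₁ x₂ : ℝ) (hx : x₁ * x₂ = 0)
    (y : ℝ) (a : Fin d → ℝ) :
    g (y + x₁ * Bl) a + g (-y + x₂ * Bb) (fun i => -(a i))
      - x₁ * rl * Bl - x₂ * rb * Bb ≤ 0 := by
  obtain rfl : g = driver rl rb rib := funext fun y => funext (hg y)
  rcases mul_eq_zero.mp hx with rfl | rfl
  · have := driver_add_driver_neg_le hlb le_rfl hibb (y + 0 * Bl) (-y + x₂ * Bb) a
    linarith
  · have := driver_add_driver_neg_le le_rfl hlb hibb (y + x₁ * Bl) (-y + 0 * Bb) a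
    linarith

/-- Lemma `lemmnew3`: if `x₁ ≥ 0`, `x₂ ≤ 0` and `x₁·x₂ = 0`, then the driver
inequality `g(y + x₁Bˡ, a) + g(−y + x₂Bᵇ, −a) − x₁rˡBˡ − x₂rᵇBᵇ ≤ 0` holds. -/
theorem stmt_5 (d : ℕ) (hd : 1 ≤ d) (rl rb : ℝ) (rib : Fin d → ℝ) (Bl Bb : ℝ)
    (hlb : rl ≤ rb) (hibl : ∀ i, rl ≤ rib i) (hibb : ∀ i, rb ≤ rib i)
    (hBl : 0 < Bl) (hBb : 0 < Bb)
    (g : ℝ → (Fin d → ℝ) → ℝ)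
    (hg : ∀ y a, g y a = -(∑ i, rib i * max (a i) 0)
      + rl * max (y + ∑ i, max (-(a i)) 0) 0
      - rb * max (-(y + ∑ i, max (-(a i)) 0)) 0)
    (x₁ x₂ : ℝ) (hx₁ : 0 ≤ x₁) (hx₂ : x₂ ≤ 0) (hx : x₁ * x₂ = 0)
    (y : ℝ) (a : Fin d → ℝ) :
    g (y + x₁ * Bl) a + g (-y + x₂ * Bb) (fun i => -(a i))
      - x₁ * rl * Bl - x₂ * rb * Bb ≤ 0 :=
  stmt_5_general d rl rb rib Bl Bb hlb hibb g hg x₁ x₂ hx y a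
end

section
/- Let d ≥ 1, let rˡ, rᵇ, r^{1,b}, …, r^{d,b}, β₁, …, β_d be real numbers with rˡ ≤ rᵇ and rᵇ ≤ r^{i,b} for every i, and let Bᵇ ∈ ℝ. Define g̃ʰ(y,a) := Σ_{i=1}^d βᵢaᵢ − Σ_{i=1}^d r^{i,b}aᵢ⁺ + rˡ·y + rˡ·Σ_{i=1}^d aᵢ⁻ and gᶜ(x,y,a) := Σ_{i=1}^d βᵢaᵢ + x·rᵇBᵇ + Σ_{i=1}^d r^{i,b}(−aᵢ)⁺ − rˡ·(−y + xBᵇ + Σ_{i=1}^d (−aᵢ)⁻)⁺ + rᵇ·(−y + xBᵇ + Σ_{i=1}^d (−aᵢ)⁻)⁻. Then for every y ≥ 0, every x ∈ ℝ and every a ∈ ℝᵈ: g̃ʰ(y,a) ≤ gᶜ(x,y,a). -/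
/-!
Write `z = -y + x Bᵇ + Σ aᵢ⁺`, the argument of the positive and negative parts in `gᶜ`.
Since `rˡ ≤ rᵇ`, the borrowing/lending terms satisfy `-rˡ z⁺ + rᵇ z⁻ ≥ -rᵇ z`, which cancels
`x rᵇ Bᵇ` and leaves `rᵇ y - rᵇ Σ aᵢ⁺`. As every `r^{i,b} ≥ rᵇ`, the funding terms
`Σ r^{i,b} (aᵢ⁺ + aᵢ⁻)` dominate `rᵇ Σ aᵢ⁺ + rᵇ Σ aᵢ⁻`, so `gᶜ - g̃ʰ ≥ (rᵇ - rˡ)(y + Σ aᵢ⁻) ≥ 0`.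
-/

open Finset

theorem mul_sum_le_sum_mul_of_le {ι R : Type*} [Semiring R] [PartialOrder R] [IsOrderedRing R]
    (s : Finset ι) {c : R} {r w : ι → R} (hr : ∀ i ∈ s, c ≤ r i) (hw : ∀ i ∈ s, 0 ≤ w i) :
    c * ∑ i ∈ s, w i ≤ ∑ i ∈ s, r i * w i := by
  rw [mul_sum]
  exact sum_le_sum fun i hi => mul_le_mul_of_nonneg_right (hr i hi) (hw i hi)

theorem mul_max_zero_sub_mul_max_neg_zero_le {R : Type*} [CommRing R] [LinearOrder R]
    [IsOrderedRing R] {l b : R} (hlb : l ≤ b) (z : R) :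
    l * max z 0 - b * max (-z) 0 ≤ b * z := by
  have hz : max z 0 - max (-z) 0 = z := posPart_sub_negPart z
  have hl : l * max z 0 ≤ b * max z 0 := mul_le_mul_of_nonneg_right hlb (le_max_right _ _)
  linear_combination hl + b * hz

theorem stmt_6_general (d : ℕ) (rl rb : ℝ) (rib β : Fin d → ℝ) (Bb : ℝ)
    (hlb : rl ≤ rb) (hib : ∀ i, rb ≤ rib i)
    (gth : ℝ → (Fin d → ℝ) → ℝ)
    (hgth : ∀ y a, gth y a = (∑ i, β i * a i) - (∑ i, rib i * max (a i) 0)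
      + rl * y + rl * ∑ i, max (-(a i)) 0)
    (gc : ℝ → ℝ → (Fin d → ℝ) → ℝ)
    (hgc : ∀ x y a, gc x y a = (∑ i, β i * a i) + x * rb * Bb
      + (∑ i, rib i * max (-(a i)) 0)
      - rl * max (-y + x * Bb + ∑ i, max (a i) 0) 0
      + rb * max (-(-y + x * Bb + ∑ i, max (a i) 0)) 0)
    (y : ℝ) (hy : 0 ≤ y) (x : ℝ) (a : Fin d → ℝ) :
    gth y a ≤ gc x y a := by
  rw [hgth, hgc]
  have hpos : rb * ∑ i, max (a i) 0 ≤ ∑ i, rib i * max (a i) 0 :=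
    mul_sum_le_sum_mul_of_le _ (fun i _ => hib i) fun i _ => le_max_right _ _
  have hneg : rb * ∑ i, max (-(a i)) 0 ≤ ∑ i, rib i * max (-(a i)) 0 :=
    mul_sum_le_sum_mul_of_le _ (fun i _ => hib i) fun i _ => le_max_right _ _
  have hz := mul_max_zero_sub_mul_max_neg_zero_le hlb (-y + x * Bb + ∑ i, max (a i) 0)
  have hneg_nonneg : 0 ≤ ∑ i, max (-(a i)) 0 := sum_nonneg fun i _ => le_max_right _ _
  linarith [mul_nonneg (sub_nonneg.2 hlb) hy, mul_nonneg (sub_nonneg.2 hlb) hneg_nonneg]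

/-- Driver comparison from the proof of Theorem `special contract pricing`:
for `y ≥ 0`, `g̃ʰ(y,a) ≤ gᶜ(x,y,a)`. -/
theorem stmt_6 (d : ℕ) (hd : 1 ≤ d) (rl rb : ℝ) (rib β : Fin d → ℝ) (Bb : ℝ)
    (hlb : rl ≤ rb) (hib : ∀ i, rb ≤ rib i)
    (gth : ℝ → (Fin d → ℝ) → ℝ)
    (hgth : ∀ y a, gth y a = (∑ i, β i * a i) - (∑ i, rib i * max (a i) 0)
      + rl * y + rl * ∑ i, max (-(a i)) 0)
    (gc : ℝ → ℝ → (Fin d → ℝ) → ℝ)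
    (hgc : ∀ x y a, gc x y a = (∑ i, β i * a i) + x * rb * Bb
      + (∑ i, rib i * max (-(a i)) 0)
      - rl * max (-y + x * Bb + ∑ i, max (a i) 0) 0
      + rb * max (-(-y + x * Bb + ∑ i, max (a i) 0)) 0)
    (y : ℝ) (hy : 0 ≤ y) (x : ℝ) (a : Fin d → ℝ) :
    gth y a ≤ gc x y a :=
  stmt_6_general d rl rb rib β Bb hlb hib gth hgth gc hgc y hy x a
end

section
/- Let d ≥ 1, let rˡ, rᵇ, r^{1,b}, …, r^{d,b}, β₁, …, β_d be real numbers with rˡ ≤ rᵇ and rᵇ ≤ r^{i,b} for every i, and let Bᵇ ∈ ℝ. Define gʰ(x,y,a) := Σ_{i=1}^d βᵢaᵢ − x·rᵇBᵇ − Σ_{i=1}^d r^{i,b}aᵢ⁺ + rˡ·(y + xBᵇ + Σ_{i=1}^d aᵢ⁻)⁺ − rᵇ·(y + xBᵇ + Σ_{i=1}^d aᵢ⁻)⁻ and g̃ᶜ(y,a) := Σ_{i=1}^d βᵢaᵢ + Σ_{i=1}^d r^{i,b}(−aᵢ)⁺ + rˡ·y − rˡ·Σ_{i=1}^d (−aᵢ)⁻.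 Then for every y ≤ 0, every x ∈ ℝ and every a ∈ ℝᵈ: gʰ(x,y,a) ≤ g̃ᶜ(y,a). -/
/-!
With `w = y + x Bᵇ + Σᵢ (-aᵢ)⁺`, the bounds `rˡ ≤ r^{i,b}` and `rᵇ ≤ r^{i,b}` on the funding terms
reduce the claim to `rˡ w⁺ - rᵇ w⁻ ≤ rᵇ w - (rᵇ - rˡ) y`, which holds because `rˡ ≤ rᵇ` and `y ≤ 0`.
-/

lemma mul_max_zero_sub_mul_max_neg_zero_le_s7 {rl rb : ℝ} (hlb : rl ≤ rb) (w : ℝ) :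
    rl * max w 0 - rb * max (-w) 0 ≤ rb * w := by
  rcases le_total 0 w with hw | hw
  · rw [max_eq_left hw, max_eq_right (neg_nonpos.mpr hw)]
    linarith [mul_le_mul_of_nonneg_right hlb hw]
  · rw [max_eq_right hw, max_eq_left (neg_nonneg.mpr hw)]
    linarith

lemma mul_sum_max_zero_le_sum_mul {ι : Type*} [Fintype ι] {c : ℝ} {r : ι → ℝ}
    (h : ∀ i, c ≤ r i) (u : ι → ℝ) :
    c * ∑ i, max (u i) 0 ≤ ∑ i, r i * max (u i) 0 := by
  rw [Finset.mul_sum]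
  exact Finset.sum_le_sum fun i _ => mul_le_mul_of_nonneg_right (h i) (le_max_right _ _)

theorem stmt_7_general (d : ℕ) (rl rb : ℝ) (rib β : Fin d → ℝ) (Bb : ℝ)
    (hlb : rl ≤ rb) (hib : ∀ i, rb ≤ rib i)
    (gh : ℝ → ℝ → (Fin d → ℝ) → ℝ)
    (hgh : ∀ x y a, gh x y a = (∑ i, β i * a i) - x * rb * Bb
      - (∑ i, rib i * max (a i) 0)
      + rl * max (y + x * Bb + ∑ i, max (-(a i)) 0) 0
      - rb * max (-(y + x * Bb + ∑ i, max (-(a i)) 0)) 0)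
    (gtc : ℝ → (Fin d → ℝ) → ℝ)
    (hgtc : ∀ y a, gtc y a = (∑ i, β i * a i) + (∑ i, rib i * max (-(a i)) 0)
      + rl * y - rl * ∑ i, max (a i) 0)
    (y : ℝ) (hy : y ≤ 0) (x : ℝ) (a : Fin d → ℝ) :
    gh x y a ≤ gtc y a := by
  rw [hgh, hgtc]
  have hlong := mul_sum_max_zero_le_sum_mul (fun i => hlb.trans (hib i)) a
  have hshort := mul_sum_max_zero_le_sum_mul hib (fun i => -(a i))
  have hrate := mul_max_zero_sub_mul_max_neg_zero_le_s7 hlb (y + x * Bb + ∑ i, max (-(a i)) 0)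
  have hspread : (rb - rl) * y ≤ 0 := mul_nonpos_of_nonneg_of_nonpos (sub_nonneg.mpr hlb) hy
  linarith

/-- Driver comparison from the proof of Theorem `special contract pricing 1`:
for `y ≤ 0`, `gʰ(x,y,a) ≤ g̃ᶜ(y,a)`. -/
theorem stmt_7 (d : ℕ) (hd : 1 ≤ d) (rl rb : ℝ) (rib β : Fin d → ℝ) (Bb : ℝ)
    (hlb : rl ≤ rb) (hib : ∀ i, rb ≤ rib i)
    (gh : ℝ → ℝ → (Fin d → ℝ) → ℝ)
    (hgh : ∀ x y a, gh x y a = (∑ i, β i * a i) - x * rb * Bb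
      - (∑ i, rib i * max (a i) 0)
      + rl * max (y + x * Bb + ∑ i, max (-(a i)) 0) 0
      - rb * max (-(y + x * Bb + ∑ i, max (-(a i)) 0)) 0)
    (gtc : ℝ → (Fin d → ℝ) → ℝ)
    (hgtc : ∀ y a, gtc y a = (∑ i, β i * a i) + (∑ i, rib i * max (-(a i)) 0)
      + rl * y - rl * ∑ i, max (a i) 0)
    (y : ℝ) (hy : y ≤ 0) (x : ℝ) (a : Fin d → ℝ) :
    gh x y a ≤ gtc y a :=
  stmt_7_general d rl rb rib β Bb hlb hib gh hgh gtc hgtc y hy x a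
end

section
/- Let d ≥ 1, let rˡ, rᵇ, r^{1,b}, …, r^{d,b} be real numbers with 0 ≤ rˡ ≤ rᵇ, and let Bˡ, Bᵇ > 0. Define g : ℝ × ℝᵈ → ℝ by g(y,a) := −Σ_{i=1}^d r^{i,b}·aᵢ⁺ + rˡ·(y + Σ_{i=1}^d aᵢ⁻)⁺ − rᵇ·(y + Σ_{i=1}^d aᵢ⁻)⁻, and fix y ∈ ℝ and a ∈ ℝᵈ. Define G : ℝ → ℝ by G(x) := −x·rˡBˡ + g(y + xBˡ, a) for x ≥ 0 and G(x) := −x·rᵇBᵇ + g(y + xBᵇ, a) for x < 0. Then for all x₁, x₂ ∈ ℝ: |G(x₁) − G(x₂)| ≤ 2·rᵇ·max(Bˡ, Bᵇ)·|x₁ − x₂|. -/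
private lemma hfun_lip (rl rb : ℝ) (hrl : 0 ≤ rl) (hlb : rl ≤ rb) (w w' : ℝ) :
    |(rl * max w 0 - rb * max (-w) 0) - (rl * max w' 0 - rb * max (-w') 0)|
      ≤ rb * |w - w'| := by
  have hid : ∀ v : ℝ, rl * max v 0 - rb * max (-v) 0
      = rl * v - (rb - rl) * max (-v) 0 := by
    intro v
    rcases le_total 0 v with h | h
    · rw [max_eq_left h, max_eq_right (neg_nonpos.mpr h)]; ring
    · rw [max_eq_right h, max_eq_left (neg_nonneg.mpr h)]; ring
  rw [hid w, hid w']
  have hm : |max (-w) 0 - max (-w') 0| ≤ |w - w'| := by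
    have := abs_max_sub_max_le_abs (-w) (-w') 0
    calc |max (-w) 0 - max (-w') 0| ≤ |(-w) - (-w')| := this
      _ = |w - w'| := by rw [show (-w) - (-w') = -(w - w') by ring, abs_neg]
  calc |(rl * w - (rb - rl) * max (-w) 0) - (rl * w' - (rb - rl) * max (-w') 0)|
      = |rl * (w - w') - (rb - rl) * (max (-w) 0 - max (-w') 0)| := by ring_nf
    _ ≤ |rl * (w - w')| + |(rb - rl) * (max (-w) 0 - max (-w') 0)| := abs_sub _ _
    _ = rl * |w - w'| + (rb - rl) * |max (-w) 0 - max (-w') 0| := by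
        rw [abs_mul, abs_mul, abs_of_nonneg hrl, abs_of_nonneg (by linarith : (0:ℝ) ≤ rb - rl)]
    _ ≤ rl * |w - w'| + (rb - rl) * |w - w'| :=
        add_le_add le_rfl (mul_le_mul_of_nonneg_left hm (by linarith))
    _ = rb * |w - w'| := by ring

/-- Uniform Lipschitz estimate in the initial endowment for the
endowment-dependent part of the hedger's BSDE generator. -/
theorem stmt_10 (d : ℕ) (hd : 1 ≤ d) (rl rb : ℝ) (rib : Fin d → ℝ) (Bl Bb : ℝ)
    (hrl : 0 ≤ rl) (hlb : rl ≤ rb) (hBl : 0 < Bl) (hBb : 0 < Bb)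
    (g : ℝ → (Fin d → ℝ) → ℝ)
    (hg : ∀ w a, g w a = -(∑ i, rib i * max (a i) 0)
      + rl * max (w + ∑ i, max (-(a i)) 0) 0
      - rb * max (-(w + ∑ i, max (-(a i)) 0)) 0)
    (y : ℝ) (a : Fin d → ℝ)
    (G : ℝ → ℝ)
    (hG : ∀ x, G x = if 0 ≤ x then -(x * rl * Bl) + g (y + x * Bl) a
                     else -(x * rb * Bb) + g (y + x * Bb) a)
    (x₁ x₂ : ℝ) :
    |G x₁ - G x₂| ≤ 2 * rb * max Bl Bb * |x₁ - x₂| := by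
  have hrb : 0 ≤ rb := le_trans hrl hlb
  set L : ℝ := 2 * rb * max Bl Bb with hL
  have hLnn : 0 ≤ L := by
    have : (0:ℝ) ≤ max Bl Bb := le_trans hBl.le (le_max_left _ _)
    positivity
  set s : ℝ := ∑ i, max (-(a i)) 0 with hs
  set S : ℝ := ∑ i, rib i * max (a i) 0 with hS
  have hgdiff : ∀ w w' : ℝ, |g w a - g w' a| ≤ rb * |w - w'| := by
    intro w w'
    have h1 := hfun_lip rl rb hrl hlb (w + s) (w' + s)
    have e : g w a - g w' a
        = (rl * max (w + s) 0 - rb * max (-(w + s)) 0)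
          - (rl * max (w' + s) 0 - rb * max (-(w' + s)) 0) := by
      rw [hg w a, hg w' a]; ring
    rw [e]
    calc _ ≤ rb * |(w + s) - (w' + s)| := h1
      _ = rb * |w - w'| := by rw [show (w + s) - (w' + s) = w - w' by ring]
  -- branch Lipschitz estimates
  have hFl : ∀ u v : ℝ, |(-(u * rl * Bl) + g (y + u * Bl) a)
      - (-(v * rl * Bl) + g (y + v * Bl) a)| ≤ L * |u - v| := by
    intro u v
    have h1 := hgdiff (y + u * Bl) (y + v * Bl)
    have e2 : (y + u * Bl) - (y + v * Bl) = (u - v) * Bl := by ring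
    rw [e2, abs_mul, abs_of_nonneg hBl.le] at h1
    calc |(-(u * rl * Bl) + g (y + u * Bl) a) - (-(v * rl * Bl) + g (y + v * Bl) a)|
        = |(-(rl * Bl)) * (u - v) + (g (y + u * Bl) a - g (y + v * Bl) a)| := by ring_nf
      _ ≤ |(-(rl * Bl)) * (u - v)| + |g (y + u * Bl) a - g (y + v * Bl) a| := abs_add_le _ _
      _ ≤ rl * Bl * |u - v| + rb * (|u - v| * Bl) := by
          refine add_le_add ?_ h1
          rw [abs_mul, abs_neg, abs_of_nonneg (by positivity : (0:ℝ) ≤ rl * Bl)]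
      _ ≤ L * |u - v| := by
          have t0 := abs_nonneg (u - v)
          have hB : Bl ≤ max Bl Bb := le_max_left _ _
          have h3 : (rl + rb) * (Bl * |u - v|) ≤ (rb + rb) * (Bl * |u - v|) :=
            mul_le_mul_of_nonneg_right (by linarith) (mul_nonneg hBl.le t0)
          have h4 : (2 * rb) * (Bl * |u - v|) ≤ (2 * rb) * (max Bl Bb * |u - v|) :=
            mul_le_mul_of_nonneg_left (mul_le_mul_of_nonneg_right hB t0) (by linarith)
          rw [hL]; nlinarith [h3, h4]
  have hFb : ∀ u v : ℝ, |(-(u * rb * Bb) + g (y + u * Bb) a)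
      - (-(v * rb * Bb) + g (y + v * Bb) a)| ≤ L * |u - v| := by
    intro u v
    have h1 := hgdiff (y + u * Bb) (y + v * Bb)
    have e2 : (y + u * Bb) - (y + v * Bb) = (u - v) * Bb := by ring
    rw [e2, abs_mul, abs_of_nonneg hBb.le] at h1
    calc |(-(u * rb * Bb) + g (y + u * Bb) a) - (-(v * rb * Bb) + g (y + v * Bb) a)|
        = |(-(rb * Bb)) * (u - v) + (g (y + u * Bb) a - g (y + v * Bb) a)| := by ring_nf
      _ ≤ |(-(rb * Bb)) * (u - v)| + |g (y + u * Bb) a - g (y + v * Bb) a| := abs_add_le _ _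
      _ ≤ rb * Bb * |u - v| + rb * (|u - v| * Bb) := by
          refine add_le_add ?_ h1
          rw [abs_mul, abs_neg, abs_of_nonneg (by positivity : (0:ℝ) ≤ rb * Bb)]
      _ ≤ L * |u - v| := by
          have t0 := abs_nonneg (u - v)
          have hB : Bb ≤ max Bl Bb := le_max_right _ _
          have h4 : (2 * rb) * (Bb * |u - v|) ≤ (2 * rb) * (max Bl Bb * |u - v|) :=
            mul_le_mul_of_nonneg_left (mul_le_mul_of_nonneg_right hB t0) (by linarith)
          rw [hL]; nlinarith [h4]
  -- the two branches agree at 0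
  have h0 : -((0:ℝ) * rl * Bl) + g (y + 0 * Bl) a = -((0:ℝ) * rb * Bb) + g (y + 0 * Bb) a := by
    simp
  rw [hG x₁, hG x₂]
  by_cases h1 : 0 ≤ x₁ <;> by_cases h2 : 0 ≤ x₂ <;> simp only [h1, h2, if_true, if_false, if_pos, if_neg]
  · exact hFl x₁ x₂
  · -- x₁ ≥ 0, x₂ < 0
    have hx2 : x₂ < 0 := lt_of_not_ge h2
    calc |(-(x₁ * rl * Bl) + g (y + x₁ * Bl) a) - (-(x₂ * rb * Bb) + g (y + x₂ * Bb) a)|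
        ≤ |(-(x₁ * rl * Bl) + g (y + x₁ * Bl) a) - (-((0:ℝ) * rl * Bl) + g (y + 0 * Bl) a)|
          + |(-((0:ℝ) * rb * Bb) + g (y + 0 * Bb) a) - (-(x₂ * rb * Bb) + g (y + x₂ * Bb) a)| := by
            rw [h0]; exact abs_sub_le _ _ _
      _ ≤ L * |x₁ - 0| + L * |0 - x₂| := add_le_add (hFl x₁ 0) (hFb 0 x₂)
      _ = L * (x₁ + (-x₂)) := by
          rw [sub_zero, zero_sub, abs_neg, abs_of_nonneg h1, abs_of_nonpos hx2.le]; ring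
      _ = L * |x₁ - x₂| := by
          rw [abs_of_nonneg (by linarith : (0:ℝ) ≤ x₁ - x₂)]; ring
  · -- x₁ < 0, x₂ ≥ 0
    have hx1 : x₁ < 0 := lt_of_not_ge h1
    calc |(-(x₁ * rb * Bb) + g (y + x₁ * Bb) a) - (-(x₂ * rl * Bl) + g (y + x₂ * Bl) a)|
        ≤ |(-(x₁ * rb * Bb) + g (y + x₁ * Bb) a) - (-((0:ℝ) * rb * Bb) + g (y + 0 * Bb) a)|
          + |(-((0:ℝ) * rl * Bl) + g (y + 0 * Bl) a) - (-(x₂ * rl * Bl) + g (y + x₂ * Bl) a)| := by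
            rw [← h0]; exact abs_sub_le _ _ _
      _ ≤ L * |x₁ - 0| + L * |0 - x₂| := add_le_add (hFb x₁ 0) (hFl 0 x₂)
      _ = L * ((-x₁) + x₂) := by
          rw [sub_zero, zero_sub, abs_neg, abs_of_nonpos hx1.le, abs_of_nonneg h2]; ring
      _ = L * |x₁ - x₂| := by
          rw [abs_of_nonpos (by linarith : x₁ - x₂ ≤ 0)]; ring
  · exact hFb x₁ x₂
end

section
/- Let d ≥ 1, let rˡ, rᵇ, r^{1,b}, …, r^{d,b}, β₁, …, β_d, Bˡ be real numbers, and define gʰˡ(x,y,a) := Σ_{i=1}^d βᵢaᵢ − x·rˡBˡ − Σ_{i=1}^d r^{i,b}aᵢ⁺ + rˡ·(y + xBˡ + Σ_{i=1}^d aᵢ⁻)⁺ − rᵇ·(y + xBˡ + Σ_{i=1}^d aᵢ⁻)⁻. Then for every λ > 0 and all x, y, c ∈ ℝ, a ∈ ℝᵈ: λ·gʰˡ(x, λ⁻¹y + c, λ⁻¹a) = gʰˡ(λx, y + λc, a). -/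
/-! The generator is positively homogeneous of degree one jointly in `(x, y, a)`, because every
nonlinearity in it is a positive or negative part `max (±w) 0`, and these commute with
multiplication by `λ ≥ 0`. The identity is this homogeneity applied at
`(x, λ⁻¹ y + c, λ⁻¹ a)`. -/

open Finset

/-- The hedger's generator `gʰˡ(x, y, a)`; `rl`, `rb`, `Bl`, `rib` stand for `rˡ`, `rᵇ`, `Bˡ`,
`r^{i,b}`. -/
def hedgerGenerator {ι : Type*} [Fintype ι] (rl rb Bl : ℝ) (rib β : ι → ℝ)
    (x y : ℝ) (a : ι → ℝ) : ℝ :=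
  (∑ i, β i * a i) - x * rl * Bl - (∑ i, rib i * max (a i) 0)
    + rl * max (y + x * Bl + ∑ i, max (-(a i)) 0) 0
    - rb * max (-(y + x * Bl + ∑ i, max (-(a i)) 0)) 0

lemma max_mul_zero_of_nonneg {lam : ℝ} (hlam : 0 ≤ lam) (w : ℝ) :
    max (lam * w) 0 = lam * max w 0 := by
  rw [mul_max_of_nonneg _ _ hlam, mul_zero]

lemma hedgerGenerator_mul {ι : Type*} [Fintype ι] (rl rb Bl : ℝ) (rib β : ι → ℝ)
    {lam : ℝ} (hlam : 0 ≤ lam) (x y : ℝ) (a : ι → ℝ) :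
    hedgerGenerator rl rb Bl rib β (lam * x) (lam * y) (fun i => lam * a i)
      = lam * hedgerGenerator rl rb Bl rib β x y a := by
  have hnet : lam * y + lam * x * Bl + ∑ i, max (-(lam * a i)) 0
      = lam * (y + x * Bl + ∑ i, max (-(a i)) 0) := by
    simp only [← mul_neg, max_mul_zero_of_nonneg hlam, ← mul_sum]
    ring
  unfold hedgerGenerator
  rw [hnet, ← mul_neg]
  simp only [max_mul_zero_of_nonneg hlam, mul_left_comm _ lam, ← mul_sum]
  ring

theorem stmt_11_general (d : ℕ) (rl rb Bl : ℝ) (rib β : Fin d → ℝ)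
    (ghl : ℝ → ℝ → (Fin d → ℝ) → ℝ)
    (hghl : ∀ x y a, ghl x y a = (∑ i, β i * a i) - x * rl * Bl
      - (∑ i, rib i * max (a i) 0)
      + rl * max (y + x * Bl + ∑ i, max (-(a i)) 0) 0
      - rb * max (-(y + x * Bl + ∑ i, max (-(a i)) 0)) 0)
    (lam : ℝ) (hlam : 0 < lam) (x y c : ℝ) (a : Fin d → ℝ) :
    lam * ghl x (lam⁻¹ * y + c) (fun i => lam⁻¹ * a i)
      = ghl (lam * x) (y + lam * c) a := by
  obtain rfl : ghl = hedgerGenerator rl rb Bl rib β := funext fun x => funext fun y =>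
    funext fun a => hghl x y a
  rw [← hedgerGenerator_mul rl rb Bl rib β hlam.le]
  congr 1
  · field_simp
  · funext i
    field_simp

/-- Positive homogeneity identity of the hedger's generator `g^{h,l}`:
`λ·gʰˡ(x, λ⁻¹y + c, λ⁻¹a) = gʰˡ(λx, y + λc, a)` for every `λ > 0`. -/
theorem stmt_11 (d : ℕ) (hd : 1 ≤ d) (rl rb Bl : ℝ) (rib β : Fin d → ℝ)
    (ghl : ℝ → ℝ → (Fin d → ℝ) → ℝ)
    (hghl : ∀ x y a, ghl x y a = (∑ i, β i * a i) - x * rl * Bl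
      - (∑ i, rib i * max (a i) 0)
      + rl * max (y + x * Bl + ∑ i, max (-(a i)) 0) 0
      - rb * max (-(y + x * Bl + ∑ i, max (-(a i)) 0)) 0)
    (lam : ℝ) (hlam : 0 < lam) (x y c : ℝ) (a : Fin d → ℝ) :
    lam * ghl x (lam⁻¹ * y + c) (fun i => lam⁻¹ * a i)
      = ghl (lam * x) (y + lam * c) a :=
  stmt_11_general d rl rb Bl rib β ghl hghl lam hlam x y c a
end

section
/- Let d ≥ 1, let rˡ, rᵇ, r^{1,b}, …, r^{d,b}, β₁, …, β_d be real numbers with rˡ ≤ rᵇ, and let Bˡ ∈ ℝ. Define g(y,a) := −Σ_{i=1}^d r^{i,b}aᵢ⁺ + rˡ·(y + Σ_{i=1}^d aᵢ⁻)⁺ − rᵇ·(y + Σ_{i=1}^d aᵢ⁻)⁻, gʰˡ(x,y,a) := Σ_{i=1}^d βᵢaᵢ − x·rˡBˡ + g(y + xBˡ, a) and gᶜˡ(x,y,a) := Σ_{i=1}^d βᵢaᵢ + x·rˡBˡ − g(−y + xBˡ, −a). Then for all x₁, x₂, y ∈ ℝ and a ∈ ℝᵈ: gʰˡ(x₁,y,a)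 − gᶜˡ(x₂,y,a) ≤ Σ_{i=1}^d (rˡ − r^{i,b})·|aᵢ|; in particular, if rˡ ≤ r^{i,b} for all i, then gʰˡ(x₁,y,a) ≤ gᶜˡ(x₂,y,a). -/
/-- Driver comparison for nonnegative endowments of both parties:
`gʰˡ(x₁,y,a) − gᶜˡ(x₂,y,a) ≤ Σᵢ (rˡ − r^{i,b})|aᵢ|`; in particular if
`rˡ ≤ r^{i,b}` for all `i` then `gʰˡ(x₁,y,a) ≤ gᶜˡ(x₂,y,a)`. -/
theorem stmt_13 (d : ℕ) (hd : 1 ≤ d) (rl rb Bl : ℝ) (rib β : Fin d → ℝ)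
    (hlb : rl ≤ rb)
    (g : ℝ → (Fin d → ℝ) → ℝ)
    (hg : ∀ y a, g y a = -(∑ i, rib i * max (a i) 0)
      + rl * max (y + ∑ i, max (-(a i)) 0) 0
      - rb * max (-(y + ∑ i, max (-(a i)) 0)) 0)
    (ghl gcl : ℝ → ℝ → (Fin d → ℝ) → ℝ)
    (hghl : ∀ x y a, ghl x y a = (∑ i, β i * a i) - x * rl * Bl + g (y + x * Bl) a)
    (hgcl : ∀ x y a, gcl x y a = (∑ i, β i * a i) + x * rl * Bl
      - g (-y + x * Bl) (fun i => -(a i)))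
    (x₁ x₂ y : ℝ) (a : Fin d → ℝ) :
    ghl x₁ y a - gcl x₂ y a ≤ ∑ i, (rl - rib i) * |a i|
    ∧ ((∀ i, rl ≤ rib i) → ghl x₁ y a ≤ gcl x₂ y a) := by
  have key : ∀ z : ℝ, rl * max z 0 - rb * max (-z) 0 ≤ rl * z := by
    intro z
    have h1 : max z 0 - max (-z) 0 = z := by
      rcases le_total z 0 with h | h
      · rw [max_eq_right h, max_eq_left (by linarith)]; ring
      · rw [max_eq_left h, max_eq_right (by linarith)]; ring
    have h2 : (0:ℝ) ≤ max (-z) 0 := le_max_right _ _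
    have h3 : rl * max (-z) 0 ≤ rb * max (-z) 0 := mul_le_mul_of_nonneg_right hlb h2
    have h4 : rl * max z 0 - rl * max (-z) 0 = rl * z := by rw [← mul_sub, h1]
    linarith
  have habs : ∀ i, |a i| = max (a i) 0 + max (-(a i)) 0 := by
    intro i
    rcases le_total (a i) 0 with h | h
    · rw [abs_of_nonpos h, max_eq_right h, max_eq_left (by linarith)]; ring
    · rw [abs_of_nonneg h, max_eq_left h, max_eq_right (by linarith)]; ring
  have hRHS : ∑ i, (rl - rib i) * |a i|
      = rl * ∑ i, max (a i) 0 + rl * ∑ i, max (-(a i)) 0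
        - ∑ i, rib i * max (a i) 0 - ∑ i, rib i * max (-(a i)) 0 := by
    rw [Finset.mul_sum, Finset.mul_sum, ← Finset.sum_add_distrib, ← Finset.sum_sub_distrib,
      ← Finset.sum_sub_distrib]
    exact Finset.sum_congr rfl fun i _ => by rw [habs]; ring
  have main : ghl x₁ y a - gcl x₂ y a ≤ ∑ i, (rl - rib i) * |a i| := by
    rw [hghl, hgcl, hg, hg, hRHS]
    simp only [neg_neg]
    have hu : rl * max (y + x₁ * Bl + ∑ i, max (-(a i)) 0) 0
        - rb * max (-(y + x₁ * Bl + ∑ i, max (-(a i)) 0)) 0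
        ≤ rl * y + rl * x₁ * Bl + rl * ∑ i, max (-(a i)) 0 :=
      (key _).trans_eq (by ring)
    have hv : rl * max (-y + x₂ * Bl + ∑ i, max (a i) 0) 0
        - rb * max (-(-y + x₂ * Bl + ∑ i, max (a i) 0)) 0
        ≤ -(rl * y) + rl * x₂ * Bl + rl * ∑ i, max (a i) 0 :=
      (key _).trans_eq (by ring)
    linarith [hu, hv]
  refine ⟨main, fun h => ?_⟩
  have : ∑ i, (rl - rib i) * |a i| ≤ 0 := by
    apply Finset.sum_nonpos
    intro i _
    exact mul_nonpos_of_nonpos_of_nonneg (by linarith [h i]) (abs_nonneg _)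
  linarith
end

section
/- Let d ≥ 1, let rˡ, rᵇ, r^{1,b}, …, r^{d,b}, β₁, …, β_d be real numbers with rˡ ≤ rᵇ, and let Bᵇ ∈ ℝ. Define g(y,a) := −Σ_{i=1}^d r^{i,b}aᵢ⁺ + rˡ·(y + Σ_{i=1}^d aᵢ⁻)⁺ − rᵇ·(y + Σ_{i=1}^d aᵢ⁻)⁻, gʰᵇ(x,y,a) := Σ_{i=1}^d βᵢaᵢ − x·rᵇBᵇ + g(y + xBᵇ, a) and gᶜᵇ(x,y,a) := Σ_{i=1}^d βᵢaᵢ + x·rᵇBᵇ − g(−y + xBᵇ, −a). Then for all x₁, x₂, y ∈ ℝ and a ∈ ℝᵈ: gʰᵇ(x₁,y,a) − gᶜᵇ(x₂,y,a) ≤ Σ_{i=1}^d (rᵇ − r^{i,b})·|aᵢ|; in particular, if rᵇ ≤ r^{i,b} for all i, then gʰᵇ(x₁,y,a) ≤ gᶜᵇ(x₂,y,a). -/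
/-- Driver comparison for nonpositive endowments of both parties:
`gʰᵇ(x₁,y,a) − gᶜᵇ(x₂,y,a) ≤ Σᵢ (rᵇ − r^{i,b})|aᵢ|`; in particular if
`rᵇ ≤ r^{i,b}` for all `i` then `gʰᵇ(x₁,y,a) ≤ gᶜᵇ(x₂,y,a)`. -/
theorem stmt_14 (d : ℕ) (hd : 1 ≤ d) (rl rb Bb : ℝ) (rib β : Fin d → ℝ)
    (hlb : rl ≤ rb)
    (g : ℝ → (Fin d → ℝ) → ℝ)
    (hg : ∀ y a, g y a = -(∑ i, rib i * max (a i) 0)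
      + rl * max (y + ∑ i, max (-(a i)) 0) 0
      - rb * max (-(y + ∑ i, max (-(a i)) 0)) 0)
    (ghb gcb : ℝ → ℝ → (Fin d → ℝ) → ℝ)
    (hghb : ∀ x y a, ghb x y a = (∑ i, β i * a i) - x * rb * Bb + g (y + x * Bb) a)
    (hgcb : ∀ x y a, gcb x y a = (∑ i, β i * a i) + x * rb * Bb
      - g (-y + x * Bb) (fun i => -(a i)))
    (x₁ x₂ y : ℝ) (a : Fin d → ℝ) :
    ghb x₁ y a - gcb x₂ y a ≤ ∑ i, (rb - rib i) * |a i|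
    ∧ ((∀ i, rb ≤ rib i) → ghb x₁ y a ≤ gcb x₂ y a) := by
  have key : ∀ w : ℝ, rl * max w 0 - rb * max (-w) 0 ≤ rb * w := by
    intro w
    have h1 : max w 0 - max (-w) 0 = w := by
      rcases le_total w 0 with h | h
      · rw [max_eq_right h, max_eq_left (by linarith)]; ring
      · rw [max_eq_left h, max_eq_right (by linarith)]; ring
    have h2 : rl * max w 0 ≤ rb * max w 0 :=
      mul_le_mul_of_nonneg_right hlb (le_max_right w 0)
    have h3 : rb * max w 0 - rb * max (-w) 0 = rb * w := by rw [← mul_sub, h1]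
    linarith [h2, h3]
  have habs : ∀ w : ℝ, |w| = max w 0 + max (-w) 0 := by
    intro w
    rcases le_total w 0 with h | h
    · rw [abs_of_nonpos h, max_eq_right h, max_eq_left (by linarith)]; ring
    · rw [abs_of_nonneg h, max_eq_left h, max_eq_right (by linarith)]; ring
  have hR : ∑ i, (rb - rib i) * |a i|
      = rb * (∑ i, max (a i) 0) + rb * (∑ i, max (-(a i)) 0)
        - (∑ i, rib i * max (a i) 0) - (∑ i, rib i * max (-(a i)) 0) := by
    have h : ∀ i ∈ Finset.univ, (rb - rib i) * |a i|
        = rb * max (a i) 0 + rb * max (-(a i)) 0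
          - rib i * max (a i) 0 - rib i * max (-(a i)) 0 := by
      intro i _
      rw [habs (a i)]; ring
    rw [Finset.sum_congr rfl h]
    simp [Finset.sum_sub_distrib, Finset.sum_add_distrib, Finset.mul_sum]
  have main : ghb x₁ y a - gcb x₂ y a ≤ ∑ i, (rb - rib i) * |a i| := by
    rw [hghb, hgcb, hg, hg, hR]
    simp only [neg_neg]
    have k1 := key (y + x₁ * Bb + ∑ i, max (-(a i)) 0)
    have k2 := key (-y + x₂ * Bb + ∑ i, max (a i) 0)
    nlinarith [k1, k2]
  refine ⟨main, fun h => ?_⟩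
  have : ∑ i, (rb - rib i) * |a i| ≤ 0 := by
    apply Finset.sum_nonpos
    intro i _
    exact mul_nonpos_of_nonpos_of_nonneg (by linarith [h i]) (abs_nonneg _)
  linarith
end

section
/- Let T > 0 and 0 < t₀ < T, and let rˡ, r, rᵇ : [0,T] → ℝ be measurable, Lebesgue-integrable functions with rˡ(u) < r(u) < rᵇ(u) for every u ∈ [0,T]. Define κ₁ := −exp(−∫₀^{t₀} rˡ(u)du) + exp(−∫₀^{T} rˡ(u)du + ∫_{t₀}^{T} r(u)du) and κ₂ := exp(−∫₀^{t₀} rᵇ(u)du) + exp(−∫₀^{T} rᵇ(u)du + ∫_{t₀}^{T} r(u)du). Then κ₁ > 0 and κ₂ > 0; moreover, for any x₁ > 0 > x₂ there exists α > 0 with x₂·κ₂⁻¹ ≤ α ≤ min{ x₁·exp(∫₀^{t₀} rˡ(u)du)·exp(−∫_{t₀}^{T}(r(u) − rˡ(u))du), −x₂·exp(∫₀^{t₀} rᵇ(u)du)·exp(−∫_{t₀}^{T}(r(u) − rᵇ(u))du), x₁·κ₁⁻¹ }, and for every such α one has α·κ₂ > 0 > −α·κ₁. -/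
open MeasureTheory Set

/-- Quantitative core of part (ii) of Proposition 5.3: positivity of `κ₁`, `κ₂`,
existence of a suitable `α > 0`, and the resulting price gap `α·κ₂ > 0 > −α·κ₁`. -/
theorem stmt_16 (T t₀ : ℝ) (hT : 0 < T) (ht₀ : 0 < t₀) (ht₀T : t₀ < T)
    (rl r rb : ℝ → ℝ)
    (hm1 : Measurable rl) (hm2 : Measurable r) (hm3 : Measurable rb)
    (hi1 : IntegrableOn rl (Icc (0 : ℝ) T))
    (hi2 : IntegrableOn r (Icc (0 : ℝ) T))
    (hi3 : IntegrableOn rb (Icc (0 : ℝ) T))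
    (hlt : ∀ u ∈ Icc (0 : ℝ) T, rl u < r u ∧ r u < rb u)
    (κ₁ κ₂ : ℝ)
    (hκ₁ : κ₁ = -Real.exp (-∫ u in (0 : ℝ)..t₀, rl u)
        + Real.exp (-(∫ u in (0 : ℝ)..T, rl u) + ∫ u in t₀..T, r u))
    (hκ₂ : κ₂ = Real.exp (-∫ u in (0 : ℝ)..t₀, rb u)
        + Real.exp (-(∫ u in (0 : ℝ)..T, rb u) + ∫ u in t₀..T, r u)) :
    0 < κ₁ ∧ 0 < κ₂ ∧
    ∀ x₁ x₂ : ℝ, 0 < x₁ → x₂ < 0 →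
      (∃ α : ℝ, 0 < α ∧ x₂ * κ₂⁻¹ ≤ α ∧
        α ≤ min (min
          (x₁ * Real.exp (∫ u in (0 : ℝ)..t₀, rl u)
              * Real.exp (-∫ u in t₀..T, (r u - rl u)))
          (-x₂ * Real.exp (∫ u in (0 : ℝ)..t₀, rb u)
              * Real.exp (-∫ u in t₀..T, (r u - rb u))))
          (x₁ * κ₁⁻¹)) ∧
      ∀ α : ℝ, 0 < α → x₂ * κ₂⁻¹ ≤ α →
        α ≤ min (min
          (x₁ * Real.exp (∫ u in (0 : ℝ)..t₀, rl u)
              * Real.exp (-∫ u in t₀..T, (r u - rl u)))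
          (-x₂ * Real.exp (∫ u in (0 : ℝ)..t₀, rb u)
              * Real.exp (-∫ u in t₀..T, (r u - rb u))))
          (x₁ * κ₁⁻¹) →
        0 < α * κ₂ ∧ -(α * κ₁) < 0 := by
  -- interval integrabilities
  have hsub1 : Icc (0:ℝ) t₀ ⊆ Icc (0:ℝ) T := Icc_subset_Icc le_rfl ht₀T.le
  have hsub2 : Icc t₀ T ⊆ Icc (0:ℝ) T := Icc_subset_Icc ht₀.le le_rfl
  have hII : ∀ (f : ℝ → ℝ), IntegrableOn f (Icc (0:ℝ) T) →
      IntervalIntegrable f volume 0 t₀ ∧ IntervalIntegrable f volume t₀ T := by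
    intro f hf
    constructor
    · exact (intervalIntegrable_iff_integrableOn_Icc_of_le ht₀.le).mpr (hf.mono_set hsub1)
    · exact (intervalIntegrable_iff_integrableOn_Icc_of_le ht₀T.le).mpr (hf.mono_set hsub2)
  obtain ⟨hrl1, hrl2⟩ := hII rl hi1
  obtain ⟨hr1, hr2⟩ := hII r hi2
  -- split of integral of rl
  have hsplit : (∫ u in (0:ℝ)..T, rl u)
      = (∫ u in (0:ℝ)..t₀, rl u) + ∫ u in t₀..T, rl u :=
    (intervalIntegral.integral_add_adjacent_intervals hrl1 hrl2).symm
  -- positivity of ∫ (r - rl) on [t₀, T]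
  have hdiffInt : IntervalIntegrable (fun u => r u - rl u) volume t₀ T := hr2.sub hrl2
  have hc : 0 < ∫ u in t₀..T, (r u - rl u) := by
    apply intervalIntegral.intervalIntegral_pos_of_pos_on hdiffInt _ ht₀T
    intro x hx
    have hxIcc : x ∈ Icc (0:ℝ) T := ⟨le_of_lt (lt_of_le_of_lt ht₀.le hx.1), hx.2.le⟩
    exact sub_pos.mpr (hlt x hxIcc).1
  have hcr : (∫ u in t₀..T, (r u - rl u))
      = (∫ u in t₀..T, r u) - ∫ u in t₀..T, rl u :=
    intervalIntegral.integral_sub hr2 hrl2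
  have hκ₁pos : 0 < κ₁ := by
    rw [hκ₁, hsplit]
    have : -((∫ u in (0:ℝ)..t₀, rl u) + ∫ u in t₀..T, rl u) + ∫ u in t₀..T, r u
        = (-∫ u in (0:ℝ)..t₀, rl u) + ((∫ u in t₀..T, r u) - ∫ u in t₀..T, rl u) := by
      ring
    rw [this, ← hcr, Real.exp_add]
    have h1 : (1:ℝ) < Real.exp (∫ u in t₀..T, (r u - rl u)) := Real.one_lt_exp_iff.mpr hc
    nlinarith [Real.exp_pos (-∫ u in (0:ℝ)..t₀, rl u)]
  have hκ₂pos : 0 < κ₂ := by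
    rw [hκ₂]
    positivity
  refine ⟨hκ₁pos, hκ₂pos, ?_⟩
  intro x₁ x₂ hx₁ hx₂
  have hminpos : 0 < min (min
      (x₁ * Real.exp (∫ u in (0 : ℝ)..t₀, rl u)
          * Real.exp (-∫ u in t₀..T, (r u - rl u)))
      (-x₂ * Real.exp (∫ u in (0 : ℝ)..t₀, rb u)
          * Real.exp (-∫ u in t₀..T, (r u - rb u))))
      (x₁ * κ₁⁻¹) := by
    refine lt_min (lt_min ?_ ?_) ?_
    · positivity
    · have : 0 < -x₂ := neg_pos.mpr hx₂
      positivity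
    · exact mul_pos hx₁ (inv_pos.mpr hκ₁pos)
  have hlo : x₂ * κ₂⁻¹ < 0 := mul_neg_of_neg_of_pos hx₂ (inv_pos.mpr hκ₂pos)
  constructor
  · exact ⟨_, hminpos, le_of_lt (hlo.trans hminpos), le_rfl⟩
  · intro α hα _ _
    exact ⟨mul_pos hα hκ₂pos, neg_neg_iff_pos.mpr (mul_pos hα hκ₁pos)⟩
end

section
/- Let T > 0 and 0 < t₀ ≤ T, let rˡ, rᵇ : [0,T] → ℝ be measurable, Lebesgue-integrable functions with rˡ(u) < rᵇ(u) for every u ∈ [0,T], and set Bˡ_t := exp(∫₀ᵗ rˡ(u)du), Bᵇ_t := exp(∫₀ᵗ rᵇ(u)du). Let x₁ > 0 > x₂ and let α satisfy 0 < α ≤ min{ x₁·Bˡ_{t₀}, −x₂·Bᵇ_{t₀} }. Then: (i) x := x₁ − α·(Bˡ_{t₀})⁻¹ ≥ 0 and (x₁ − α·(Bˡ_{t₀})⁻¹)·Bˡ_T + α·exp(∫_{t₀}^{T} rˡ(u)du) = x₁·Bˡ_T; (ii) x̃ := x₂ + α·(Bᵇ_{t₀})⁻¹ ≤ 0 and (x₂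 + α·(Bᵇ_{t₀})⁻¹)·Bᵇ_T − α·exp(∫_{t₀}^{T} rᵇ(u)du) = x₂·Bᵇ_T; (iii) −α·(Bˡ_{t₀})⁻¹ < −α·(Bᵇ_{t₀})⁻¹. -/
open MeasureTheory Set

/-!
Splitting `∫₀ᵀ r` at `t₀` gives `B_T = B_{t₀} · exp (∫_{t₀}^T r)` for either account, which makes
the two replication identities pure algebra. Since `rˡ < rᵇ` on `(0, t₀)`, a set of positive measure, `Bˡ_{t₀} < Bᵇ_{t₀}`, which orders the two prices.
-/

theorem Real.exp_integral_add_adjacent_intervals {f : ℝ → ℝ} {a b c : ℝ}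
    (hab : IntervalIntegrable f volume a b) (hbc : IntervalIntegrable f volume b c) :
    Real.exp (∫ u in a..c, f u) = Real.exp (∫ u in a..b, f u) * Real.exp (∫ u in b..c, f u) := by
  rw [← Real.exp_add, intervalIntegral.integral_add_adjacent_intervals hab hbc]

theorem intervalIntegral.integral_lt_integral_of_forall_lt {f g : ℝ → ℝ} {a b : ℝ} (hab : a < b)
    (hf : IntervalIntegrable f volume a b) (hg : IntervalIntegrable g volume a b)
    (hlt : ∀ x ∈ Ioo a b, f x < g x) : ∫ x in a..b, f x < ∫ x in a..b, g x := by
  have hpos : 0 < ∫ x in a..b, (g x - f x) :=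
    intervalIntegral_pos_of_pos_on (hg.sub hf) (fun x hx => sub_pos.2 (hlt x hx)) hab
  rwa [intervalIntegral.integral_sub hg hf, sub_pos] at hpos

theorem replication_identity {B₀ B E x α : ℝ} (hB₀ : B₀ ≠ 0) (hB : B = B₀ * E) :
    (x - α * B₀⁻¹) * B + α * E = x * B := by
  subst hB
  field_simp
  ring

theorem stmt_17_general (T t₀ : ℝ) (ht₀ : 0 < t₀) (ht₀T : t₀ ≤ T)
    (rl rb : ℝ → ℝ)
    (hi1 : IntegrableOn rl (Icc (0 : ℝ) T))
    (hi2 : IntegrableOn rb (Icc (0 : ℝ) T))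
    (hlt : ∀ u ∈ Icc (0 : ℝ) T, rl u < rb u)
    (Bl Bb : ℝ → ℝ)
    (hBl : ∀ t, Bl t = Real.exp (∫ u in (0 : ℝ)..t, rl u))
    (hBb : ∀ t, Bb t = Real.exp (∫ u in (0 : ℝ)..t, rb u))
    (x₁ x₂ α : ℝ)
    (hα : 0 < α) (hα2 : α ≤ min (x₁ * Bl t₀) (-x₂ * Bb t₀)) :
    (0 ≤ x₁ - α * (Bl t₀)⁻¹ ∧
      (x₁ - α * (Bl t₀)⁻¹) * Bl T + α * Real.exp (∫ u in t₀..T, rl u) = x₁ * Bl T) ∧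
    (x₂ + α * (Bb t₀)⁻¹ ≤ 0 ∧
      (x₂ + α * (Bb t₀)⁻¹) * Bb T - α * Real.exp (∫ u in t₀..T, rb u) = x₂ * Bb T) ∧
    -(α * (Bl t₀)⁻¹) < -(α * (Bb t₀)⁻¹) := by
  have hsub {f : ℝ → ℝ} (hf : IntegrableOn f (Icc 0 T)) {c d : ℝ} (hc : 0 ≤ c) (hcd : c ≤ d)
      (hd : d ≤ T) : IntervalIntegrable f volume c d :=
    (intervalIntegrable_iff_integrableOn_Icc_of_le hcd).2 (hf.mono_set (Icc_subset_Icc hc hd))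
  have hBl₀ : 0 < Bl t₀ := hBl t₀ ▸ Real.exp_pos _
  have hBb₀ : 0 < Bb t₀ := hBb t₀ ▸ Real.exp_pos _
  have hBlT : Bl T = Bl t₀ * Real.exp (∫ u in t₀..T, rl u) := by
    rw [hBl, hBl, Real.exp_integral_add_adjacent_intervals (hsub hi1 le_rfl ht₀.le ht₀T)
      (hsub hi1 ht₀.le ht₀T le_rfl)]
  have hBbT : Bb T = Bb t₀ * Real.exp (∫ u in t₀..T, rb u) := by
    rw [hBb, hBb, Real.exp_integral_add_adjacent_intervals (hsub hi2 le_rfl ht₀.le ht₀T)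
      (hsub hi2 ht₀.le ht₀T le_rfl)]
  have hB₀ : Bl t₀ < Bb t₀ := by
    rw [hBl, hBb, Real.exp_lt_exp]
    exact intervalIntegral.integral_lt_integral_of_forall_lt ht₀ (hsub hi1 le_rfl ht₀.le ht₀T)
      (hsub hi2 le_rfl ht₀.le ht₀T) fun u hu => hlt u ⟨hu.1.le, hu.2.le.trans ht₀T⟩
  refine ⟨⟨?_, replication_identity hBl₀.ne' hBlT⟩, ⟨?_, ?_⟩, ?_⟩
  · exact sub_nonneg.2 ((mul_inv_le_iff₀ hBl₀).2 (hα2.trans (min_le_left _ _)))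
  · have := (mul_inv_le_iff₀ hBb₀).2 (hα2.trans (min_le_right _ _))
    linarith
  · simpa [sub_eq_add_neg] using replication_identity (x := x₂) (α := -α) hBb₀.ne' hBbT
  · exact neg_lt_neg (mul_lt_mul_of_pos_left (inv_strictAnti₀ hBl₀ hB₀) hα)

/-- Remark `remark for increasing contract`: replication computations showing
`Pʰ₀(x₁,A,C) = −α(Bˡ_{t₀})⁻¹ < −α(Bᵇ_{t₀})⁻¹ = Pᶜ₀(x₂,−A,−C)`. -/
theorem stmt_17 (T t₀ : ℝ) (hT : 0 < T) (ht₀ : 0 < t₀) (ht₀T : t₀ ≤ T)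
    (rl rb : ℝ → ℝ) (hm1 : Measurable rl) (hm2 : Measurable rb)
    (hi1 : IntegrableOn rl (Icc (0 : ℝ) T))
    (hi2 : IntegrableOn rb (Icc (0 : ℝ) T))
    (hlt : ∀ u ∈ Icc (0 : ℝ) T, rl u < rb u)
    (Bl Bb : ℝ → ℝ)
    (hBl : ∀ t, Bl t = Real.exp (∫ u in (0 : ℝ)..t, rl u))
    (hBb : ∀ t, Bb t = Real.exp (∫ u in (0 : ℝ)..t, rb u))
    (x₁ x₂ α : ℝ) (hx₁ : 0 < x₁) (hx₂ : x₂ < 0)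
    (hα : 0 < α) (hα2 : α ≤ min (x₁ * Bl t₀) (-x₂ * Bb t₀)) :
    (0 ≤ x₁ - α * (Bl t₀)⁻¹ ∧
      (x₁ - α * (Bl t₀)⁻¹) * Bl T + α * Real.exp (∫ u in t₀..T, rl u) = x₁ * Bl T) ∧
    (x₂ + α * (Bb t₀)⁻¹ ≤ 0 ∧
      (x₂ + α * (Bb t₀)⁻¹) * Bb T - α * Real.exp (∫ u in t₀..T, rb u) = x₂ * Bb T) ∧
    -(α * (Bl t₀)⁻¹) < -(α * (Bb t₀)⁻¹) :=
  stmt_17_general T t₀ ht₀ ht₀T rl rb hi1 hi2 hlt Bl Bb hBl hBb x₁ x₂ α hα hα2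
end
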